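/- arXiv:2001.05394 — 9 statements merged into one kernel-verified Lean document; each statement's English description precedes it below -/
import Mathlib

section
/- Suppose there exists a latin square L of order w (w ≥ 3) that contains three pairwise disjoint transversals. Then there exists a PDP(3w), i.e. a PDP(3, 3w). -/
/-- A parallel class on the point set `α`: a collection of pairwise disjoint
blocks, each of size `k`, whose union is all of `α`. -/
def IsParallelClass {α : Type} (k : ℕ) (P : Finset (Finset α)) : Prop :=
  (∀ B ∈ P, B.card = k) ∧ (∀ x : α, ∃! B, B ∈ P ∧ x ∈ B)

/-- No pair of distinct points occurs in more than one block among the blocks of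
the parallel classes `P 0, …, P (k-1)` (blocks in different classes being regarded
as distinct). -/
def PairCondition {α : Type} (k : ℕ) (P : Fin k → Finset (Finset α)) : Prop :=
  ∀ x y : α, x ≠ y → ∀ i j : Fin k, ∀ B ∈ P i, ∀ B' ∈ P j,
    x ∈ B → y ∈ B → x ∈ B' → y ∈ B' → i = j ∧ B = B'

/-- There is a system of distinct representatives for the blocks: an assignment of a
point `h (i, B) ∈ B` to each block `B` of each parallel class `P i`, under which every
point of `α` is assigned to exactly one block. -/
def HasSDR {α : Type} (k : ℕ) (P : Fin k → Finset (Finset α)) : Prop :=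
  ∃ h : Fin k × Finset α → α,
    (∀ i : Fin k, ∀ B ∈ P i, h (i, B) ∈ B) ∧
    (∀ x : α, ∃! p : Fin k × Finset α, p.2 ∈ P p.1 ∧ h p = x)

/-- `P 0, …, P (k-1)` form a PDP with `k` courses on the point set `α`. -/
def IsPDP {α : Type} (k : ℕ) (P : Fin k → Finset (Finset α)) : Prop :=
  (∀ i : Fin k, IsParallelClass k (P i)) ∧ PairCondition k P ∧ HasSDR k P

/-- A PDP(k, v) exists. -/
def PDPExists (k v : ℕ) : Prop :=
  ∃ P : Fin k → Finset (Finset (Fin v)), IsPDP k P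

/-- `L` is a latin square of order `w`: each symbol occurs exactly once in each row
and exactly once in each column. -/
def IsLatinSquare {w : ℕ} (L : Fin w → Fin w → Fin w) : Prop :=
  (∀ r : Fin w, Function.Injective (L r)) ∧
  (∀ c : Fin w, Function.Injective (fun r => L r c))

/-- `T` is a transversal of the latin square `L` of order `w`: a set of `w` cells,
one in each row and one in each column, whose entries are pairwise distinct. -/
def IsTransversal {w : ℕ} (L : Fin w → Fin w → Fin w) (T : Finset (Fin w × Fin w)) : Prop :=
  T.card = w ∧
  (∀ p ∈ T, ∀ q ∈ T, p.1 = q.1 → p = q) ∧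
  (∀ p ∈ T, ∀ q ∈ T, p.2 = q.2 → p = q) ∧
  (∀ p ∈ T, ∀ q ∈ T, L p.1 p.2 = L q.1 q.2 → p = q)

/-- Two latin squares of order `w` are orthogonal if the map
`(i, j) ↦ (L i j, L' i j)` is injective. -/
def OrthogonalLS {w : ℕ} (L L' : Fin w → Fin w → Fin w) : Prop :=
  Function.Injective (fun p : Fin w × Fin w => (L p.1 p.2, L' p.1 p.2))

section PDPAux

variable {w : ℕ} (L : Fin w → Fin w → Fin w)

/-- The three "coordinates" of a cell: row, column, symbol. -/
def pdpCoord (a : Fin 3) (p : Fin w × Fin w) : Fin w :=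
  if a.val = 0 then p.1 else if a.val = 1 then p.2 else L p.1 p.2

/-- The block associated to a cell. -/
def pdpBlk (p : Fin w × Fin w) : Finset (Fin (3 * w)) :=
  Finset.image (fun a : Fin 3 => finProdFinEquiv (a, pdpCoord L a p)) Finset.univ

lemma pdp_mem_blk {x : Fin (3 * w)} {p : Fin w × Fin w} :
    x ∈ pdpBlk L p ↔ pdpCoord L (finProdFinEquiv.symm x).1 p = (finProdFinEquiv.symm x).2 := by
  simp only [pdpBlk, Finset.mem_image, Finset.mem_univ, true_and]
  constructor
  · rintro ⟨a, rfl⟩; simp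
  · intro h
    exact ⟨(finProdFinEquiv.symm x).1, by rw [h, Prod.mk.eta, Equiv.apply_symm_apply]⟩

lemma pdp_blk_card (p : Fin w × Fin w) : (pdpBlk L p).card = 3 := by
  have hinj : Function.Injective (fun a : Fin 3 => finProdFinEquiv (a, pdpCoord L a p)) := by
    intro a b h
    simpa using congrArg Prod.fst (finProdFinEquiv.injective h)
  rw [pdpBlk, Finset.card_image_of_injective _ hinj, Finset.card_univ, Fintype.card_fin]

lemma pdp_cell_eq (hL : IsLatinSquare L) (a b : Fin 3) (hab : a ≠ b)
    (p q : Fin w × Fin w) (h1 : pdpCoord L a p = pdpCoord L a q)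
    (h2 : pdpCoord L b p = pdpCoord L b q) : p = q := by
  fin_cases a <;> fin_cases b <;> simp only [pdpCoord] at h1 h2 <;>
    norm_num at h1 h2 <;>
  first
  | exact absurd rfl hab
  | exact Prod.ext h1 h2
  | exact Prod.ext h2 h1
  | (rw [h1] at h2; exact Prod.ext h1 (hL.1 _ h2))
  | (rw [h2] at h1; exact Prod.ext h2 (hL.1 _ h1))
  | (rw [h1] at h2; exact Prod.ext (hL.2 _ h2) h1)
  | (rw [h2] at h1; exact Prod.ext (hL.2 _ h1) h2)

lemma pdp_coord_inj {T : Finset (Fin w × Fin w)} (hT : IsTransversal L T) (a : Fin 3) :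
    ∀ p ∈ T, ∀ q ∈ T, pdpCoord L a p = pdpCoord L a q → p = q := by
  intro p hp q hq hco
  fin_cases a <;> simp only [pdpCoord] at hco <;> norm_num at hco
  · exact hT.2.1 p hp q hq hco
  · exact hT.2.2.1 p hp q hq hco
  · exact hT.2.2.2 p hp q hq hco

lemma pdp_eu_coord {T : Finset (Fin w × Fin w)} (hT : IsTransversal L T) (a : Fin 3)
    (r : Fin w) : ∃! p, p ∈ T ∧ pdpCoord L a p = r := by
  have hinj := pdp_coord_inj L hT a
  have hcard : (T.image (pdpCoord L a)).card = w := by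
    rw [Finset.card_image_of_injOn (fun p hp q hq => hinj p hp q hq), hT.1]
  have huniv : T.image (pdpCoord L a) = Finset.univ :=
    Finset.eq_univ_of_card _ (by rw [hcard, Fintype.card_fin])
  obtain ⟨p, hp, hpa⟩ := Finset.mem_image.1 (huniv ▸ Finset.mem_univ r)
  exact ⟨p, ⟨hp, hpa⟩, fun q ⟨hq, hqa⟩ => hinj q hq p hp (hqa.trans hpa.symm)⟩

end PDPAux


/-- Suppose there is a latin square of order `w ≥ 3` that contains three pairwise
disjoint transversals. Then there is a PDP(3, 3w). -/
theorem pdp_of_latin_square_with_three_disjoint_transversals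
    (w : ℕ) (hw : 3 ≤ w) (L : Fin w → Fin w → Fin w) (hL : IsLatinSquare L)
    (T : Fin 3 → Finset (Fin w × Fin w)) (hT : ∀ i : Fin 3, IsTransversal L (T i))
    (hdisj : ∀ i j : Fin 3, i ≠ j → Disjoint (T i) (T j)) :
    PDPExists 3 (3 * w) := by
  classical
  have hw0 : 0 < w := by omega
  refine ⟨fun i => (T i).image (pdpBlk L), ?_, ?_, ?_⟩
  · -- parallel classes
    intro i
    constructor
    · intro B hB
      obtain ⟨p, hp, rfl⟩ := Finset.mem_image.1 hB
      exact pdp_blk_card L p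
    · intro x
      obtain ⟨p, ⟨hp, hpc⟩, hpu⟩ :=
        pdp_eu_coord L (hT i) (finProdFinEquiv.symm x).1 (finProdFinEquiv.symm x).2
      refine ⟨pdpBlk L p, ⟨Finset.mem_image_of_mem _ hp, (pdp_mem_blk L).2 hpc⟩, ?_⟩
      rintro B ⟨hB, hxB⟩
      obtain ⟨q, hq, rfl⟩ := Finset.mem_image.1 hB
      rw [pdp_mem_blk] at hxB
      rw [hpu q ⟨hq, hxB⟩]
  · -- pair condition
    intro x y hxy i j B hB B' hB' hxB hyB hxB' hyB'
    obtain ⟨p, hp, rfl⟩ := Finset.mem_image.1 hB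
    obtain ⟨q, hq, rfl⟩ := Finset.mem_image.1 hB'
    rw [pdp_mem_blk] at hxB hyB hxB' hyB'
    have hpq : p = q := by
      by_cases hfst : (finProdFinEquiv.symm x).1 = (finProdFinEquiv.symm y).1
      · exfalso
        apply hxy
        apply finProdFinEquiv.symm.injective
        exact Prod.ext hfst (by rw [← hxB, ← hyB, hfst])
      · exact pdp_cell_eq L hL _ _ hfst p q (hxB.trans hxB'.symm) (hyB.trans hyB'.symm)
    subst hpq
    have hij : i = j := by
      by_contra hne
      exact (Finset.disjoint_left.1 (hdisj i j hne) hp) hq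
    exact ⟨hij, rfl⟩
  · -- SDR
    set h : Fin 3 × Finset (Fin (3 * w)) → Fin (3 * w) := fun qB =>
      if hx : ∃ z ∈ qB.2, (finProdFinEquiv.symm z).1 = qB.1 then hx.choose
      else finProdFinEquiv (qB.1, ⟨0, hw0⟩) with hh
    have hb : ∀ (i : Fin 3) (p : Fin w × Fin w),
        h (i, pdpBlk L p) = finProdFinEquiv (i, pdpCoord L i p) := by
      intro i p
      have hx : ∃ z ∈ pdpBlk L p, (finProdFinEquiv.symm z).1 = i :=
        ⟨finProdFinEquiv (i, pdpCoord L i p), (pdp_mem_blk L).2 (by simp), by simp⟩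
      rw [hh]
      simp only
      rw [dif_pos hx]
      obtain ⟨hmem, hfst⟩ := hx.choose_spec
      rw [pdp_mem_blk] at hmem
      have heq : finProdFinEquiv.symm hx.choose = (i, pdpCoord L i p) :=
        Prod.ext hfst (by rw [← hmem, hfst])
      rw [← Equiv.apply_symm_apply finProdFinEquiv hx.choose, heq]
    refine ⟨h, ?_, ?_⟩
    · intro i B hB
      obtain ⟨p, hp, rfl⟩ := Finset.mem_image.1 hB
      rw [hb]
      exact (pdp_mem_blk L).2 (by simp)
    · intro x
      obtain ⟨p, ⟨hp, hpc⟩, hpu⟩ :=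
        pdp_eu_coord L (hT (finProdFinEquiv.symm x).1) (finProdFinEquiv.symm x).1
          (finProdFinEquiv.symm x).2
      refine ⟨((finProdFinEquiv.symm x).1, pdpBlk L p),
        ⟨Finset.mem_image_of_mem _ hp, ?_⟩, ?_⟩
      · rw [hb, hpc, Prod.mk.eta, Equiv.apply_symm_apply]
      · rintro ⟨j, B⟩ ⟨hB, hhx⟩
        obtain ⟨q, hq, rfl⟩ := Finset.mem_image.1 hB
        rw [hb] at hhx
        have h2 : (j, pdpCoord L j q) = finProdFinEquiv.symm x := by
          rw [← hhx]; simp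
        have hj : j = (finProdFinEquiv.symm x).1 := congrArg Prod.fst h2
        have hc : pdpCoord L j q = (finProdFinEquiv.symm x).2 := congrArg Prod.snd h2
        exact Prod.ext hj (congrArg (pdpBlk L) (hpu q ⟨hj ▸ hq, hj ▸ hc⟩))
end

section
/- For every integer w ≥ 3 there exists a PDP(3w), i.e. a PDP(3, 3w). -/
set_option linter.unusedSectionVars false
namespace PDPaux

variable (w : ℕ) [NeZero w]

def dl (t : Fin 3) : ZMod w := ((t : ℕ) : ZMod w)

def gg : Fin 3 → Fin 3 := fun i =>
  match i with
  | ⟨0, _⟩ => 0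
  | ⟨1, _⟩ => 2
  | ⟨2, _⟩ => 1

def sh (c : Fin 3) : Fin 3 → ZMod w := fun i =>
  match i with
  | ⟨0, _⟩ => 0
  | ⟨1, _⟩ => dl w c
  | ⟨2, _⟩ => dl w (gg c)

def lvl (i : Fin 3) : ZMod 3 := ((i : ℕ) : ZMod 3)

def blk (c : Fin 3) (x : ZMod w) : Finset (ZMod 3 × ZMod w) :=
  Finset.image (fun i : Fin 3 => (lvl i, x + sh w c i)) Finset.univ

def Pc (c : Fin 3) : Finset (Finset (ZMod 3 × ZMod w)) :=
  Finset.image (blk w c) Finset.univ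

lemma lvl_inj : Function.Injective lvl := by decide

lemma lvl_surj : ∀ a : ZMod 3, ∃ i, lvl i = a := by decide

lemma dl_inj (hw : 3 ≤ w) : Function.Injective (dl w) := by
  intro t t' h
  have ht : (t : ℕ) < w := lt_of_lt_of_le t.isLt hw
  have ht' : (t' : ℕ) < w := lt_of_lt_of_le t'.isLt hw
  have h2 := congrArg ZMod.val h
  rw [dl, dl, ZMod.val_cast_of_lt ht, ZMod.val_cast_of_lt ht'] at h2
  exact Fin.ext h2

lemma ne_zero_small (hw : 3 ≤ w) {a : ℕ} (h1 : 0 < a) (h2 : a < 3) :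
    ((a : ℕ) : ZMod w) ≠ 0 := by
  intro hc
  rw [ZMod.natCast_eq_zero_iff] at hc
  exact absurd (Nat.le_of_dvd h1 hc) (by omega)

lemma one_ne (hw : 3 ≤ w) : (1 : ZMod w) ≠ 0 := by
  simpa using ne_zero_small w hw (a := 1) one_pos (by omega)

lemma two_ne (hw : 3 ≤ w) : (2 : ZMod w) ≠ 0 := by
  simpa using ne_zero_small w hw (a := 2) two_pos (by omega)

lemma sh_inj (hw : 3 ≤ w) : ∀ {i j c c' : Fin 3}, i ≠ j →
    sh w c i - sh w c j = sh w c' i - sh w c' j → c = c' := by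
  have h1 := one_ne w hw
  have h2 := two_ne w hw
  have hdl := dl_inj w hw
  have hgg : Function.Injective gg := by decide
  have hd : ∀ c c' : Fin 3, dl w c - dl w (gg c) = dl w c' - dl w (gg c') → c = c' := by
    intro c c' h
    fin_cases c <;> fin_cases c' <;> simp only [dl, gg, Nat.cast_ofNat, Nat.cast_one, Nat.cast_zero, Fin.val_zero, Fin.val_one, Fin.val_two] at h <;>
      first
        | rfl
        | (exfalso;
           first
             | exact h1 (by linear_combination h)
             | exact h1 (by linear_combination -h)
             | exact h2 (by linear_combination h)
             | exact h2 (by linear_combination -h))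
  intro i j c c' hij h
  fin_cases i <;> fin_cases j <;> simp only [sh] at h hij ⊢ <;>
    first
      | exact absurd rfl hij
      | exact hdl (by linear_combination h)
      | exact hdl (by linear_combination -h)
      | exact hgg (hdl (by linear_combination h))
      | exact hgg (hdl (by linear_combination -h))
      | exact hd c c' (by linear_combination h)
      | exact hd c c' (by linear_combination -h)


lemma mem_blk {a : ZMod 3} {y : ZMod w} {c : Fin 3} {x : ZMod w} :
    (a, y) ∈ blk w c x ↔ ∃ i, lvl i = a ∧ x + sh w c i = y := by
  simp [blk, Prod.ext_iff]

lemma mem_Pc {B : Finset (ZMod 3 × ZMod w)} {c : Fin 3} :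
    B ∈ Pc w c ↔ ∃ x, B = blk w c x := by
  simp [Pc, eq_comm]

lemma sh_zero (c : Fin 3) : sh w c 0 = 0 := rfl

lemma blk_inj {c : Fin 3} {x x' : ZMod w} (h : blk w c x = blk w c x') : x = x' := by
  have hm : (lvl 0, x + sh w c 0) ∈ blk w c x :=
    Finset.mem_image_of_mem _ (Finset.mem_univ 0)
  rw [h, mem_blk] at hm
  obtain ⟨i, hi, hx⟩ := hm
  have h0 : i = 0 := lvl_inj hi
  subst h0
  rw [sh_zero, add_zero, add_zero] at hx
  exact hx.symm

lemma par (hw : 3 ≤ w) (c : Fin 3) : IsParallelClass 3 (Pc w c) := by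
  constructor
  · intro B hB
    rw [mem_Pc] at hB
    obtain ⟨x, rfl⟩ := hB
    rw [blk, Finset.card_image_of_injective _
      (fun i j hij => lvl_inj (congrArg Prod.fst hij))]
    simp
  · rintro ⟨a, y⟩
    obtain ⟨i, hi⟩ := lvl_surj a
    refine ⟨blk w c (y - sh w c i), ⟨?_, ?_⟩, ?_⟩
    · rw [mem_Pc]; exact ⟨_, rfl⟩
    · rw [mem_blk]; exact ⟨i, hi, by ring⟩
    · rintro B ⟨hB, hpB⟩
      rw [mem_Pc] at hB
      obtain ⟨x, rfl⟩ := hB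
      rw [mem_blk] at hpB
      obtain ⟨i', hi', hx⟩ := hpB
      have hii : i' = i := lvl_inj (hi'.trans hi.symm)
      subst hii
      congr 1
      linear_combination hx

lemma pairc (hw : 3 ≤ w) : PairCondition 3 (Pc w) := by
  rintro ⟨a, y⟩ ⟨b, z⟩ hpq c c' B hB B' hB' hpB hqB hpB' hqB'
  rw [mem_Pc] at hB hB'
  obtain ⟨x, rfl⟩ := hB
  obtain ⟨x', rfl⟩ := hB'
  rw [mem_blk] at hpB hqB hpB' hqB'
  obtain ⟨i, hi1, hi2⟩ := hpB
  obtain ⟨j, hj1, hj2⟩ := hqB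
  obtain ⟨i', hi'1, hi'2⟩ := hpB'
  obtain ⟨j', hj'1, hj'2⟩ := hqB'
  have hii : i' = i := lvl_inj (hi'1.trans hi1.symm)
  have hjj : j' = j := lvl_inj (hj'1.trans hj1.symm)
  rw [hii] at hi'1 hi'2
  rw [hjj] at hj'1 hj'2
  have hij : i ≠ j := by
    rintro rfl
    exact hpq (Prod.ext_iff.mpr ⟨hi1.symm.trans hj1, hi2.symm.trans hj2⟩)
  have hcc : c = c' := sh_inj w hw hij (by linear_combination hi2 - hj2 - hi'2 + hj'2)
  subst hcc
  refine ⟨rfl, ?_⟩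
  congr 1
  linear_combination hi2 - hi'2

noncomputable def rep (p : Fin 3 × Finset (ZMod 3 × ZMod w)) : ZMod 3 × ZMod w :=
  if hB : ∃ x, p.2 = blk w p.1 x then (lvl p.1, hB.choose + sh w p.1 p.1) else (0, 0)

lemma rep_eq {c : Fin 3} {x : ZMod w} : rep w (c, blk w c x) = (lvl c, x + sh w c c) := by
  have hex : ∃ x', (c, blk w c x).2 = blk w (c, blk w c x).1 x' := ⟨x, rfl⟩
  rw [rep, dif_pos hex]
  have hch : hex.choose = x := (blk_inj w hex.choose_spec).symm
  rw [hch]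

lemma sdr (hw : 3 ≤ w) : HasSDR 3 (Pc w) := by
  classical
  refine ⟨rep w, ?_, ?_⟩
  · intro c B hB
    rw [mem_Pc] at hB
    obtain ⟨x, rfl⟩ := hB
    rw [rep_eq, mem_blk]
    exact ⟨c, rfl, rfl⟩
  · rintro ⟨a, y⟩
    obtain ⟨c, hc⟩ := lvl_surj a
    refine ⟨(c, blk w c (y - sh w c c)), ⟨?_, ?_⟩, ?_⟩
    · rw [mem_Pc]; exact ⟨_, rfl⟩
    · rw [rep_eq]
      exact Prod.ext_iff.mpr ⟨hc, by ring⟩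
    · rintro ⟨c', B⟩ ⟨hB, hval⟩
      simp only at hB hval
      rw [mem_Pc] at hB
      obtain ⟨x, rfl⟩ := hB
      rw [rep_eq] at hval
      have h1 : lvl c' = a := congrArg Prod.fst hval
      have h2 : x + sh w c' c' = y := congrArg Prod.snd hval
      have hcc : c' = c := lvl_inj (h1.trans hc.symm)
      subst hcc
      have hx : x = y - sh w c' c' := by linear_combination h2
      rw [hx]

end PDPaux

namespace PDPaux

lemma transfer {α : Type} [DecidableEq α] {k v : ℕ} (e : α ≃ Fin v)
    {P : Fin k → Finset (Finset α)} (h : IsPDP k P) : PDPExists k v := by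
  classical
  obtain ⟨hpar, hpair, hsdr⟩ := h
  set F : Finset α → Finset (Fin v) := fun B => B.image e with hF
  have hFF : ∀ B, (F B).image e.symm = B := by
    intro B; simp [F, Finset.image_image]
  have hmemF : ∀ (y : Fin v) (B : Finset α), y ∈ F B ↔ e.symm y ∈ B := by
    intro y B
    simp only [F, Finset.mem_image]
    constructor
    · rintro ⟨a, ha, rfl⟩; simpa using ha
    · intro hy; exact ⟨e.symm y, hy, by simp⟩
  refine ⟨fun i => (P i).image F, ?_, ?_, ?_⟩
  · intro i
    constructor
    · intro C hC
      simp only [Finset.mem_image] at hC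
      obtain ⟨B, hB, rfl⟩ := hC
      rw [hF, Finset.card_image_of_injective _ e.injective]
      exact (hpar i).1 B hB
    · intro y
      obtain ⟨B, ⟨hB1, hB2⟩, hBu⟩ := (hpar i).2 (e.symm y)
      refine ⟨F B, ⟨Finset.mem_image_of_mem _ hB1, (hmemF y B).2 hB2⟩, ?_⟩
      rintro C ⟨hC1, hC2⟩
      simp only [Finset.mem_image] at hC1
      obtain ⟨B', hB', rfl⟩ := hC1
      rw [hmemF] at hC2
      rw [hBu B' ⟨hB', hC2⟩]
  · intro x y hxy i j C hC C' hC' hx hy hx' hy'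
    simp only [Finset.mem_image] at hC hC'
    obtain ⟨B, hB, rfl⟩ := hC
    obtain ⟨B', hB', rfl⟩ := hC'
    rw [hmemF] at hx hy hx' hy'
    have hne : e.symm x ≠ e.symm y := fun hc => hxy (by simpa using congrArg e hc)
    obtain ⟨hij, hBB⟩ := hpair _ _ hne i j B hB B' hB' hx hy hx' hy'
    exact ⟨hij, by rw [hBB]⟩
  · obtain ⟨h0, hmem, huniq⟩ := hsdr
    refine ⟨fun p => e (h0 (p.1, p.2.image e.symm)), ?_, ?_⟩
    · intro i C hC
      simp only [Finset.mem_image] at hC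
      obtain ⟨B, hB, rfl⟩ := hC
      show e (h0 (i, (F B).image e.symm)) ∈ F B
      rw [hFF, hmemF]
      simpa using hmem i B hB
    · intro y
      obtain ⟨⟨i, B⟩, ⟨hB1, hB2⟩, hu⟩ := huniq (e.symm y)
      refine ⟨(i, F B), ⟨Finset.mem_image_of_mem _ hB1, ?_⟩, ?_⟩
      · show e (h0 (i, (F B).image e.symm)) = y
        rw [hFF]
        show e (h0 (i, B)) = y
        rw [hB2]; simp
      · rintro ⟨j, C⟩ ⟨hC1, hC2⟩
        simp only [Finset.mem_image] at hC1
        obtain ⟨B', hB', rfl⟩ := hC1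
        have hC2' : h0 (j, B') = e.symm y := by
          have h3 : e (h0 (j, (F B').image e.symm)) = y := hC2
          rw [hFF] at h3
          simpa using congrArg e.symm h3
        have h2 := hu (j, B') ⟨hB', hC2'⟩
        rw [Prod.mk.injEq] at h2
        obtain ⟨rfl, rfl⟩ := h2
        rfl

end PDPaux


/-- For every integer `w ≥ 3` there exists a PDP(3, 3w). -/
theorem pdp_three_exists (w : ℕ) (hw : 3 ≤ w) : PDPExists 3 (3 * w) := by
  haveI : NeZero w := ⟨by omega⟩
  have e : (ZMod 3 × ZMod w) ≃ Fin (3 * w) :=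
    Fintype.equivFinOfCardEq (by simp [ZMod.card])
  exact PDPaux.transfer e ⟨fun c => PDPaux.par w hw c, PDPaux.pairc w hw, PDPaux.sdr w hw⟩
end

section
/- Let w ≥ 3 with w ≠ 4, and let X = Z_w × {0,1,2}. For i = 0,1,2 define the parallel class P_i = { {(a,0), (a+i,1), (a+2i,2)} : a ∈ Z_w } (arithmetic modulo w), and for a block B ∈ P_i let h(B) be the unique point of B whose second coordinate equals i. Then P_0, P_1, P_2 together with h form a PDP(3w): each P_i is a partition of X into w disjoint 3-element blocks, no pair of distinct points of X occurs in more than one of the 3w blocks, and h assigns to each block one of its points with every point of X assigned exactly once. -/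
lemma pdp_aux_mul_ne_zero (w : ℕ) (hw : 3 ≤ w) (hw4 : w ≠ 4)
    (d k : ℤ) (hd : d ≠ 0) (hk : k ≠ 0) (hd2 : d.natAbs ≤ 2) (hk2 : k.natAbs ≤ 2) :
    ((d * k : ℤ) : ZMod w) ≠ 0 := by
  intro h0
  rw [ZMod.intCast_zmod_eq_zero_iff_dvd] at h0
  have h1 : w ∣ (d * k).natAbs := Int.natAbs_dvd_natAbs.mpr (by exact_mod_cast h0)
  rw [Int.natAbs_mul] at h1
  have hda : 1 ≤ d.natAbs := Nat.pos_of_ne_zero (Int.natAbs_ne_zero.mpr hd)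
  have hka : 1 ≤ k.natAbs := Nat.pos_of_ne_zero (Int.natAbs_ne_zero.mpr hk)
  have hle : w ≤ d.natAbs * k.natAbs :=
    Nat.le_of_dvd (Nat.mul_pos hda hka) h1
  have h4 : d.natAbs * k.natAbs ≤ 4 := by
    calc d.natAbs * k.natAbs ≤ 2 * 2 := Nat.mul_le_mul hd2 hk2
    _ = 4 := rfl
  have hw3 : w = 3 := by omega
  subst hw3
  interval_cases hd' : d.natAbs <;> interval_cases hk' : k.natAbs <;> omega

lemma pdp_aux_blk_mem (w : ℕ) [NeZero w] (i : Fin 3) (a : ZMod w) (x : ZMod w × Fin 3) :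
    x ∈ ({(a, (0 : Fin 3)), (a + (i.val : ZMod w), (1 : Fin 3)),
          (a + 2 * (i.val : ZMod w), (2 : Fin 3))} : Finset (ZMod w × Fin 3))
    ↔ x.1 = a + (x.2.val : ZMod w) * (i.val : ZMod w) := by
  obtain ⟨c, t⟩ := x
  fin_cases t <;> simp [Prod.ext_iff, Fin.ext_iff]


/-- Let `w ≥ 3`, `w ≠ 4`. On the point set `ZMod w × Fin 3`, the parallel classes
`P i = { {(a,0), (a+i,1), (a+2i,2)} : a ∈ ZMod w }` for `i = 0, 1, 2`, together with
the host map sending a block of `P i` to its unique point with second coordinate `i`,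
form a PDP(3w): each `P i` is a partition of the point set into `w` disjoint 3-element
blocks, no pair of distinct points occurs in more than one of the `3w` blocks, and the
hosts give each block one of its points with every point assigned exactly once. -/
theorem pdp_direct_construction_three
    (w : ℕ) [NeZero w] (hw : 3 ≤ w) (hw4 : w ≠ 4)
    (P : Fin 3 → Finset (Finset (ZMod w × Fin 3)))
    (hP : ∀ i : Fin 3, P i =
      Finset.image (fun a : ZMod w =>
        ({(a, (0 : Fin 3)), (a + (i.val : ZMod w), (1 : Fin 3)),
          (a + 2 * (i.val : ZMod w), (2 : Fin 3))} : Finset (ZMod w × Fin 3)))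
        Finset.univ)
    (h : Fin 3 → Finset (ZMod w × Fin 3) → ZMod w × Fin 3)
    (hh : ∀ i : Fin 3, ∀ B ∈ P i, h i B ∈ B ∧ (h i B).2 = i) :
    (∀ i : Fin 3, ∀ B ∈ P i, B.card = 3) ∧
    (∀ i : Fin 3, (P i).card = w) ∧
    (∀ i : Fin 3, ∀ x : ZMod w × Fin 3, ∃! B, B ∈ P i ∧ x ∈ B) ∧
    (∀ x y : ZMod w × Fin 3, x ≠ y → ∀ i j : Fin 3, ∀ B ∈ P i, ∀ B' ∈ P j,
        x ∈ B → y ∈ B → x ∈ B' → y ∈ B' → i = j ∧ B = B') ∧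
    (∀ x : ZMod w × Fin 3, ∃! p : Fin 3 × Finset (ZMod w × Fin 3),
        p.2 ∈ P p.1 ∧ h p.1 p.2 = x) := by
  set blk : Fin 3 → ZMod w → Finset (ZMod w × Fin 3) := fun i a =>
    ({(a, (0 : Fin 3)), (a + (i.val : ZMod w), (1 : Fin 3)),
      (a + 2 * (i.val : ZMod w), (2 : Fin 3))} : Finset (ZMod w × Fin 3)) with hblk
  have hmem : ∀ (i : Fin 3) (a : ZMod w) (x : ZMod w × Fin 3),
      x ∈ blk i a ↔ x.1 = a + (x.2.val : ZMod w) * (i.val : ZMod w) := by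
    intro i a x; exact pdp_aux_blk_mem w i a x
  have hPmem : ∀ (i : Fin 3) (B : Finset (ZMod w × Fin 3)),
      B ∈ P i ↔ ∃ a : ZMod w, blk i a = B := by
    intro i B
    rw [hP i, Finset.mem_image]
    simp [hblk]
  have hmem0 : ∀ (i : Fin 3) (a : ZMod w), (a, (0 : Fin 3)) ∈ blk i a := by
    intro i a
    rw [hmem]
    show a = a + ((0 : Fin 3).val : ZMod w) * _
    simp
  have hinj : ∀ i : Fin 3, Function.Injective (blk i) := by
    intro i a b hab
    have := (hmem i b (a, 0)).mp (hab ▸ hmem0 i a)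
    simpa using this
  -- determine a from membership of x
  have hval : ∀ (i : Fin 3) (a : ZMod w) (x : ZMod w × Fin 3),
      x ∈ blk i a → a = x.1 - (x.2.val : ZMod w) * (i.val : ZMod w) := by
    intro i a x hx
    rw [hmem] at hx
    rw [hx]; ring
  -- the host of a block
  have hhost : ∀ (i : Fin 3) (a : ZMod w),
      h i (blk i a) = (a + (i.val : ZMod w) * (i.val : ZMod w), i) := by
    intro i a
    have hBP : blk i a ∈ P i := (hPmem i _).mpr ⟨a, rfl⟩
    obtain ⟨hmemB, hsnd⟩ := hh i _ hBP
    have h1 := (hmem i a _).mp hmemB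
    rw [hsnd] at h1
    exact Prod.ext h1 hsnd
  refine ⟨?_, ?_, ?_, ?_, ?_⟩
  · -- cardinality 3
    intro i B hB
    obtain ⟨a, rfl⟩ := (hPmem i B).mp hB
    rw [hblk]
    rw [Finset.card_insert_of_notMem (by simp [Prod.ext_iff]),
        Finset.card_insert_of_notMem (by simp [Prod.ext_iff]),
        Finset.card_singleton]
  · -- cardinality w
    intro i
    rw [hP i, Finset.card_image_of_injective _ (hinj i), Finset.card_univ, ZMod.card]
  · -- exactly one block of P i through each point
    intro i x
    refine ⟨blk i (x.1 - (x.2.val : ZMod w) * (i.val : ZMod w)),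
      ⟨(hPmem i _).mpr ⟨_, rfl⟩, ?_⟩, ?_⟩
    · rw [hmem]; ring
    · rintro B ⟨hB, hxB⟩
      obtain ⟨a, rfl⟩ := (hPmem i B).mp hB
      rw [hval i a x hxB]
  · -- linearity: no pair in two blocks
    intro x y hxy i j B hB B' hB' hxB hyB hxB' hyB'
    obtain ⟨a, rfl⟩ := (hPmem i B).mp hB
    obtain ⟨a', rfl⟩ := (hPmem j B').mp hB'
    have e1 := (hmem i a x).mp hxB
    have e2 := (hmem i a y).mp hyB
    have e3 := (hmem j a' x).mp hxB'
    have e4 := (hmem j a' y).mp hyB'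
    have hst : x.2 ≠ y.2 := by
      intro hsnd
      apply hxy
      have : x.1 = y.1 := by rw [e1, e2, hsnd]
      exact Prod.ext this hsnd
    have hij : i = j := by
      by_contra hij
      have key : (((((y.2.val : ℤ) - (x.2.val : ℤ)) * ((i.val : ℤ) - (j.val : ℤ))) : ℤ) : ZMod w) = 0 := by
        push_cast
        linear_combination e1 - e2 + e4 - e3
      refine pdp_aux_mul_ne_zero w hw hw4
        ((y.2.val : ℤ) - (x.2.val : ℤ)) ((i.val : ℤ) - (j.val : ℤ)) ?_ ?_ ?_ ?_ key
      · intro hd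
        apply hst
        have : (y.2.val : ℤ) = x.2.val := by omega
        exact (Fin.ext (by exact_mod_cast this.symm))
      · intro hk
        apply hij
        have : (i.val : ℤ) = j.val := by omega
        exact Fin.ext (by exact_mod_cast this)
      · have := x.2.isLt; have := y.2.isLt; omega
      · have := i.isLt; have := j.isLt; omega
    subst hij
    refine ⟨rfl, ?_⟩
    congr 1
    rw [hval i a x hxB, hval i a' x hxB']
  · -- hosts: every point assigned exactly once
    intro x
    obtain ⟨c, t⟩ := x
    refine ⟨(t, blk t (c - (t.val : ZMod w) * (t.val : ZMod w))),
      ⟨(hPmem t _).mpr ⟨_, rfl⟩, ?_⟩, ?_⟩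
    · show h t (blk t _) = _
      rw [hhost]
      have : c - (t.val : ZMod w) * (t.val : ZMod w)
          + (t.val : ZMod w) * (t.val : ZMod w) = c := by ring
      rw [this]
    · rintro ⟨i, B⟩ ⟨hB, hhB⟩
      dsimp only at hB hhB
      obtain ⟨a, rfl⟩ := (hPmem i B).mp hB
      rw [hhost] at hhB
      have hi : i = t := congrArg Prod.snd hhB
      subst hi
      have h1 : a + (i.val : ZMod w) * (i.val : ZMod w) = c := congrArg Prod.fst hhB
      have ha : a = c - (i.val : ZMod w) * (i.val : ZMod w) := eq_sub_of_add_eq h1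
      rw [ha]
end

section
/- There does not exist a PDP(3) and there does not exist a PDP(6); that is, for v = 3 and v = 6 no collection of three parallel classes of 3-element blocks on a v-element point set can have the property that no pair of distinct points occurs in more than one block. -/
lemma no_three : ¬ ∃ P : Fin 3 → Finset (Finset (Fin 3)),
    (∀ i : Fin 3, IsParallelClass 3 (P i)) ∧ PairCondition 3 P := by
  rintro ⟨P, hP, hpair⟩
  have huniv : ∀ i : Fin 3, (Finset.univ : Finset (Fin 3)) ∈ P i := by
    intro i
    obtain ⟨B, ⟨hB, hx⟩, -⟩ := (hP i).2 0
    have : B = Finset.univ := by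
      apply Finset.eq_of_subset_of_card_le (Finset.subset_univ B)
      simp [(hP i).1 B hB]
    rwa [this] at hB
  have := hpair 0 1 (by decide) 0 1 _ (huniv 0) _ (huniv 1)
    (Finset.mem_univ _) (Finset.mem_univ _) (Finset.mem_univ _) (Finset.mem_univ _)
  exact absurd this.1 (by decide)

lemma no_six : ¬ ∃ P : Fin 3 → Finset (Finset (Fin 6)),
    (∀ i : Fin 3, IsParallelClass 3 (P i)) ∧ PairCondition 3 P := by
  rintro ⟨P, hP, hpair⟩
  have hdisj : ∀ i : Fin 3, ∀ B ∈ P i, ∀ B' ∈ P i, B ≠ B' → Disjoint B B' := by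
    intro i B hB B' hB' hne
    rw [Finset.disjoint_left]
    intro x hx hx'
    obtain ⟨C, -, huniq⟩ := (hP i).2 x
    exact hne ((huniq B ⟨hB, hx⟩).trans (huniq B' ⟨hB', hx'⟩).symm)
  have hcard : ∀ i : Fin 3, (P i).card = 2 := by
    intro i
    have hu : (P i).biUnion id = Finset.univ := by
      apply Finset.eq_univ_of_forall
      intro x
      obtain ⟨B, ⟨hB, hx⟩, -⟩ := (hP i).2 x
      exact Finset.mem_biUnion.2 ⟨B, hB, hx⟩
    have h1 : ((P i).biUnion id).card = ∑ B ∈ P i, B.card :=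
      Finset.card_biUnion (fun B hB B' hB' h => hdisj i B hB B' hB' h)
    rw [hu] at h1
    have h2 : ∑ B ∈ P i, B.card = ∑ B ∈ P i, 3 :=
      Finset.sum_congr rfl (fun B hB => (hP i).1 B hB)
    simp [h2, Finset.sum_const] at h1
    omega
  set T : Finset (Fin 3 × Finset (Fin 6)) :=
    Finset.univ.biUnion (fun i => (P i).image (fun B => (i, B))) with hT
  have hmemT : ∀ p : Fin 3 × Finset (Fin 6), p ∈ T ↔ p.2 ∈ P p.1 := by
    rintro ⟨i, B⟩
    simp only [hT, Finset.mem_biUnion, Finset.mem_univ, true_and, Finset.mem_image]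
    constructor
    · rintro ⟨j, C, hC, h⟩
      obtain ⟨rfl, rfl⟩ := Prod.mk.injEq .. ▸ h
      exact hC
    · intro h; exact ⟨i, B, h, rfl⟩
  have hTcard : T.card = 6 := by
    rw [hT, Finset.card_biUnion]
    · have : ∀ i : Fin 3, ((P i).image (fun B => (i, B))).card = 2 := by
        intro i
        rw [Finset.card_image_of_injective _ (fun a b h => (Prod.mk.injEq .. ▸ h).2)]
        exact hcard i
      simp [this]
    · intro i _ j _ hij
      rw [Function.onFun, Finset.disjoint_left]
      rintro ⟨a, B⟩ h1 h2
      simp only [Finset.mem_image] at h1 h2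
      obtain ⟨_, _, rfl, -⟩ := h1
      obtain ⟨_, _, rfl, -⟩ := h2
      exact hij rfl
  set f : Fin 3 × Finset (Fin 6) → Finset (Finset (Fin 6)) :=
    fun p => p.2.powersetCard 2 with hf
  have hfdisj : ∀ p ∈ T, ∀ q ∈ T, p ≠ q → Disjoint (f p) (f q) := by
    intro p hp q hq hne
    rw [Finset.disjoint_left]
    intro s hs hs'
    rw [hf] at hs hs'
    simp only [Finset.mem_powersetCard] at hs hs'
    obtain ⟨x, y, hxy, rfl⟩ := Finset.card_eq_two.1 hs.2
    have hx : x ∈ ({x, y} : Finset (Fin 6)) := by simp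
    have hy : y ∈ ({x, y} : Finset (Fin 6)) := by simp
    have := hpair x y hxy p.1 q.1 p.2 ((hmemT p).1 hp) q.2 ((hmemT q).1 hq)
      (hs.1 hx) (hs.1 hy) (hs'.1 hx) (hs'.1 hy)
    exact hne (Prod.ext this.1 this.2)
  have hbig : (T.biUnion f).card = 18 := by
    rw [Finset.card_biUnion hfdisj]
    have : ∀ p ∈ T, (f p).card = 3 := by
      intro p hp
      rw [hf]
      simp only [Finset.card_powersetCard]
      rw [(hP p.1).1 p.2 ((hmemT p).1 hp)]
      decide
    rw [Finset.sum_congr rfl this, Finset.sum_const, hTcard]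
    rfl
  have hsub : T.biUnion f ⊆ (Finset.univ : Finset (Fin 6)).powersetCard 2 := by
    intro s hs
    obtain ⟨p, -, hps⟩ := Finset.mem_biUnion.1 hs
    rw [hf] at hps
    simp only [Finset.mem_powersetCard] at hps ⊢
    exact ⟨Finset.subset_univ s, hps.2⟩
  have hle := Finset.card_le_card hsub
  rw [hbig] at hle
  have : ((Finset.univ : Finset (Fin 6)).powersetCard 2).card = 15 := by
    rw [Finset.card_powersetCard]; decide
  omega

/-- There is no PDP(3) and no PDP(6); indeed, for `v = 3` and `v = 6` no collection of
three parallel classes of 3-element blocks on a `v`-element point set can have the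
property that no pair of distinct points occurs in more than one block. -/
theorem no_pdp_three_and_no_pdp_six :
    ¬ PDPExists 3 3 ∧ ¬ PDPExists 3 6 ∧
    (¬ ∃ P : Fin 3 → Finset (Finset (Fin 3)),
        (∀ i : Fin 3, IsParallelClass 3 (P i)) ∧ PairCondition 3 P) ∧
    (¬ ∃ P : Fin 3 → Finset (Finset (Fin 6)),
        (∀ i : Fin 3, IsParallelClass 3 (P i)) ∧ PairCondition 3 P) := by
  refine ⟨?_, ?_, no_three, no_six⟩
  · rintro ⟨P, h1, h2, -⟩
    exact no_three ⟨P, h1, h2⟩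
  · rintro ⟨P, h1, h2, -⟩
    exact no_six ⟨P, h1, h2⟩
end

section
/- Let w ≥ k ≥ 3, and suppose there is no factorization w = s·t with 2 ≤ s ≤ k−1 and 2 ≤ t ≤ k−1. Let X = Z_w × {0,…,k−1}, and for i = 0,…,k−1 define the parallel class P_i = { {(a,0), (a+i,1), (a+2i,2), …, (a+(k−1)i, k−1)} : a ∈ Z_w } (arithmetic modulo w); for a block B ∈ P_i let h(B) be the unique point of B whose second coordinate equals i. Then P_0, …, P_{k−1} together with h form a PDP(k, kw): each P_i is a partition of X into w disjoint k-element blocks, no pair of distinct points of X occurs in more than one of the kw blocks, and h assigns to each block one of its points with every point of X assigned exactly once. -/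
private lemma pdp_key (k w : ℕ) (hw : k ≤ w)
    (hfac : ¬ ∃ s t : ℕ, w = s * t ∧ 2 ≤ s ∧ s ≤ k - 1 ∧ 2 ≤ t ∧ t ≤ k - 1)
    (d e : ℕ) (hd0 : 0 < d) (hdk : d < k) (he0 : 0 < e) (hek : e < k)
    (hdvd : w ∣ d * e) : False := by
  have hw0 : 0 < w := by omega
  set g := Nat.gcd w d with hg
  have hg0 : 0 < g := Nat.gcd_pos_of_pos_right _ hd0
  have hgw : g ∣ w := Nat.gcd_dvd_left _ _
  have hgd : g ∣ d := Nat.gcd_dvd_right _ _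
  have hcop : Nat.Coprime (w / g) (d / g) := Nat.coprime_div_gcd_div_gcd hg0
  have h1 : (w / g) ∣ (d / g) * e := by
    have h2 : g * (w / g) ∣ g * ((d / g) * e) := by
      rw [Nat.mul_div_cancel' hgw, ← mul_assoc, Nat.mul_div_cancel' hgd]
      exact hdvd
    exact (mul_dvd_mul_iff_left (by omega : g ≠ 0)).mp h2
  have h2 : (w / g) ∣ e := hcop.dvd_of_dvd_mul_left h1
  have hwg_le : w / g ≤ e := Nat.le_of_dvd he0 h2
  have hg_le : g ≤ d := Nat.le_of_dvd hd0 hgd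
  have hmul : w = g * (w / g) := (Nat.mul_div_cancel' hgw).symm
  have hgge : 2 ≤ g := by
    by_contra hlt
    have h3 : g * (w / g) ≤ 1 * (w / g) := Nat.mul_le_mul (by omega) (Nat.le_refl _)
    rw [one_mul] at h3
    omega
  have hwgge : 2 ≤ w / g := by
    by_contra hlt
    have h3 : g * (w / g) ≤ g * 1 := Nat.mul_le_mul (Nat.le_refl _) (by omega)
    rw [mul_one] at h3
    omega
  exact hfac ⟨g, w / g, hmul, hgge, by omega, hwgge, by omega⟩

private lemma pdp_diff (k w : ℕ) [NeZero w] (hw : k ≤ w)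
    (hfac : ¬ ∃ s t : ℕ, w = s * t ∧ 2 ≤ s ∧ s ≤ k - 1 ∧ 2 ≤ t ∧ t ≤ k - 1)
    (m n p q : ℕ) (hm : m < k) (hp : p < k)
    (hmn : m ≠ n) (hpq : p ≠ q) (hn : n < k) (hq : q < k)
    (heq : ((m : ZMod w) - n) * ((p : ZMod w) - q) = 0) : False := by
  have key : ∀ d e : ℕ, 0 < d → d < k → 0 < e → e < k → ((d : ZMod w) * e = 0) → False := by
    intro d e h1 h2 h3 h4 h5
    have hdvd : w ∣ d * e := by
      rwa [← Nat.cast_mul, ZMod.natCast_eq_zero_iff] at h5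
    exact pdp_key k w hw hfac d e h1 h2 h3 h4 hdvd
  have cast_lt : ∀ a b : ℕ, a < b → ((a : ZMod w) - b) = -(((b - a : ℕ) : ZMod w)) := by
    intro a b hab
    rw [Nat.cast_sub hab.le]; ring
  have cast_gt : ∀ a b : ℕ, b < a → ((a : ZMod w) - b) = (((a - b : ℕ) : ZMod w)) := by
    intro a b hab
    rw [Nat.cast_sub hab.le]
  rcases hmn.lt_or_gt with h1 | h1 <;> rcases hpq.lt_or_gt with h2 | h2
  · rw [cast_lt _ _ h1, cast_lt _ _ h2, neg_mul_neg] at heq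
    exact key _ _ (by omega) (by omega) (by omega) (by omega) heq
  · rw [cast_lt _ _ h1, cast_gt _ _ h2, neg_mul, neg_eq_zero] at heq
    exact key _ _ (by omega) (by omega) (by omega) (by omega) heq
  · rw [cast_gt _ _ h1, cast_lt _ _ h2, mul_neg, neg_eq_zero] at heq
    exact key _ _ (by omega) (by omega) (by omega) (by omega) heq
  · rw [cast_gt _ _ h1, cast_gt _ _ h2] at heq
    exact key _ _ (by omega) (by omega) (by omega) (by omega) heq


/-- Let `w ≥ k ≥ 3`, and suppose there is no factorization `w = s * t` with
`2 ≤ s ≤ k - 1` and `2 ≤ t ≤ k - 1`. On the point set `ZMod w × Fin k`, the parallel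
classes `P i = { {(a,0), (a+i,1), (a+2i,2), …, (a+(k-1)i, k-1)} : a ∈ ZMod w }` for
`i = 0, …, k-1`, together with the host map sending a block of `P i` to its unique
point with second coordinate `i`, form a PDP(k, kw): each `P i` is a partition of the
point set into `w` disjoint `k`-element blocks, no pair of distinct points occurs in
more than one of the `kw` blocks, and the hosts give each block one of its points with
every point assigned exactly once. -/
theorem pdp_direct_construction_general
    (k w : ℕ) [NeZero w] (hk : 3 ≤ k) (hw : k ≤ w)
    (hfac : ¬ ∃ s t : ℕ, w = s * t ∧ 2 ≤ s ∧ s ≤ k - 1 ∧ 2 ≤ t ∧ t ≤ k - 1)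
    (P : Fin k → Finset (Finset (ZMod w × Fin k)))
    (hP : ∀ i : Fin k, P i =
      Finset.image (fun a : ZMod w =>
        Finset.image (fun j : Fin k =>
          ((a + (j.val : ZMod w) * (i.val : ZMod w), j) : ZMod w × Fin k))
          Finset.univ)
        Finset.univ)
    (h : Fin k → Finset (ZMod w × Fin k) → ZMod w × Fin k)
    (hh : ∀ i : Fin k, ∀ B ∈ P i, h i B ∈ B ∧ (h i B).2 = i) :
    (∀ i : Fin k, ∀ B ∈ P i, B.card = k) ∧
    (∀ i : Fin k, (P i).card = w) ∧
    (∀ i : Fin k, ∀ x : ZMod w × Fin k, ∃! B, B ∈ P i ∧ x ∈ B) ∧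
    (∀ x y : ZMod w × Fin k, x ≠ y → ∀ i j : Fin k, ∀ B ∈ P i, ∀ B' ∈ P j,
        x ∈ B → y ∈ B → x ∈ B' → y ∈ B' → i = j ∧ B = B') ∧
    (∀ x : ZMod w × Fin k, ∃! p : Fin k × Finset (ZMod w × Fin k),
        p.2 ∈ P p.1 ∧ h p.1 p.2 = x) := by
  haveI : NeZero k := ⟨by omega⟩
  set blk : Fin k → ZMod w → Finset (ZMod w × Fin k) :=
    fun i a => Finset.image (fun j : Fin k =>
      ((a + (j.val : ZMod w) * (i.val : ZMod w), j) : ZMod w × Fin k)) Finset.univ with hblk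
  have mem_blk : ∀ (i : Fin k) (a : ZMod w) (x : ZMod w × Fin k),
      x ∈ blk i a ↔ x.1 = a + (x.2.val : ZMod w) * (i.val : ZMod w) := by
    intro i a x
    simp only [hblk, Finset.mem_image, Finset.mem_univ, true_and, Prod.ext_iff]
    constructor
    · rintro ⟨j, h1, h2⟩; subst h2; exact h1.symm
    · intro hx; exact ⟨x.2, hx.symm, rfl⟩
  have memP : ∀ (i : Fin k) (B : Finset (ZMod w × Fin k)), B ∈ P i ↔ ∃ a, B = blk i a := by
    intro i B
    rw [hP i]
    constructor
    · intro hB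
      obtain ⟨a, _, ha⟩ := Finset.mem_image.mp hB
      exact ⟨a, ha.symm⟩
    · rintro ⟨a, rfl⟩
      exact Finset.mem_image.mpr ⟨a, Finset.mem_univ _, rfl⟩
  -- statement 3 core: unique block in each class through a point
  have uniq3 : ∀ (i : Fin k) (x : ZMod w × Fin k), ∃! B, B ∈ P i ∧ x ∈ B := by
    intro i x
    refine ⟨blk i (x.1 - (x.2.val : ZMod w) * (i.val : ZMod w)),
      ⟨(memP i _).mpr ⟨_, rfl⟩, (mem_blk _ _ _).mpr (by ring)⟩, ?_⟩
    rintro B ⟨hB, hxB⟩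
    obtain ⟨a, rfl⟩ := (memP i B).mp hB
    have hx := (mem_blk i a x).mp hxB
    have ha : a = x.1 - (x.2.val : ZMod w) * (i.val : ZMod w) := by
      linear_combination -hx
    rw [ha]
  refine ⟨?_, ?_, uniq3, ?_, ?_⟩
  · -- card of each block is k
    intro i B hB
    obtain ⟨a, rfl⟩ := (memP i B).mp hB
    rw [hblk]
    rw [Finset.card_image_of_injective _ (fun j1 j2 hj => congrArg Prod.snd hj)]
    simp
  · -- card of each class is w
    intro i
    rw [hP i]
    rw [Finset.card_image_of_injective]
    · simp [ZMod.card]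
    · intro a a' hE
      have hE' : blk i a = blk i a' := hE
      have h0 : ((a, (0 : Fin k)) : ZMod w × Fin k) ∈ blk i a := by
        rw [mem_blk]; simp
      rw [hE'] at h0
      have h1 := (mem_blk i a' (a, (0 : Fin k))).mp h0
      simpa using h1
  · -- no pair in two blocks
    intro x y hxy i j B hB B' hB' hxB hyB hxB' hyB'
    obtain ⟨a, rfl⟩ := (memP i B).mp hB
    obtain ⟨a', rfl⟩ := (memP j B').mp hB'
    have e1 := (mem_blk i a x).mp hxB
    have e2 := (mem_blk i a y).mp hyB
    have e3 := (mem_blk j a' x).mp hxB'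
    have e4 := (mem_blk j a' y).mp hyB'
    have hsne : x.2 ≠ y.2 := by
      intro hsame
      apply hxy
      apply Prod.ext _ hsame
      rw [e1, e2, hsame]
    have hij : i = j := by
      by_contra hijne
      have heq : (((y.2.val : ℕ) : ZMod w) - (x.2.val : ℕ)) *
          (((i.val : ℕ) : ZMod w) - (j.val : ℕ)) = 0 := by
        linear_combination e1 - e2 + e4 - e3
      exact pdp_diff k w hw hfac y.2.val x.2.val i.val j.val y.2.isLt i.isLt
        (fun hc => hsne (Fin.ext hc.symm)) (fun hc => hijne (Fin.ext hc))
        x.2.isLt j.isLt heq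
    refine ⟨hij, ?_⟩
    subst hij
    have ha : a = a' := by linear_combination e3 - e1
    rw [ha]
  · -- hosts: every point assigned exactly once
    intro x
    set B₀ := blk x.2 (x.1 - (x.2.val : ZMod w) * (x.2.val : ZMod w)) with hB₀
    have hB₀P : B₀ ∈ P x.2 := (memP x.2 B₀).mpr ⟨_, rfl⟩
    have hhx : h x.2 B₀ = x := by
      obtain ⟨hz1, hz2⟩ := hh x.2 B₀ hB₀P
      have hz := (mem_blk _ _ _).mp hz1
      rw [hz2] at hz
      apply Prod.ext
      · rw [hz]; ring
      · exact hz2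
    refine ⟨(x.2, B₀), ⟨hB₀P, hhx⟩, ?_⟩
    rintro ⟨i, B⟩ ⟨hBP, hBx⟩
    simp only at hBP hBx ⊢
    have h2 : i = x.2 := by
      have h3 := (hh i B hBP).2
      rw [hBx] at h3
      exact h3.symm
    have hxB : x ∈ B := by
      have h4 := (hh i B hBP).1
      rwa [hBx] at h4
    obtain ⟨a, rfl⟩ := (memP i B).mp hBP
    have hx := (mem_blk i a x).mp hxB
    have ha : a = x.1 - (x.2.val : ZMod w) * (x.2.val : ZMod w) := by
      rw [h2] at hx
      linear_combination -hx
    rw [Prod.mk.injEq]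
    exact ⟨h2, by rw [ha, h2, hB₀]⟩
end

section
/- Let k ≥ 2 and w ≥ k, and suppose there exist integers d and e with 1 ≤ d ≤ k−1 and 1 ≤ e ≤ k−1 such that w divides e·d. Then w can be factored as w = s·t where s and t are integers with 2 ≤ s ≤ k−1 and 2 ≤ t ≤ k−1. -/
/-- Let `k ≥ 2` and `w ≥ k`, and suppose there are integers `d`, `e` with
`1 ≤ d ≤ k - 1` and `1 ≤ e ≤ k - 1` such that `w` divides `e * d`. Then `w` can be
factored as `w = s * t` with `2 ≤ s ≤ k - 1` and `2 ≤ t ≤ k - 1`. -/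
theorem factorization_from_divisibility
    (k w d e : ℕ) (hk : 2 ≤ k) (hw : k ≤ w)
    (hd1 : 1 ≤ d) (hd2 : d ≤ k - 1) (he1 : 1 ≤ e) (he2 : e ≤ k - 1)
    (hdvd : w ∣ e * d) :
    ∃ s t : ℕ, w = s * t ∧ 2 ≤ s ∧ s ≤ k - 1 ∧ 2 ≤ t ∧ t ≤ k - 1 := by
  have hw0 : 0 < w := lt_of_lt_of_le (by omega) hw
  set g := Nat.gcd w e with hg
  have hg0 : 0 < g := Nat.gcd_pos_of_pos_left e hw0
  have hcop : Nat.Coprime (w / g) (e / g) := Nat.coprime_div_gcd_div_gcd hg0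
  have hwg : g * (w / g) = w := Nat.mul_div_cancel' (Nat.gcd_dvd_left w e)
  have heg : g * (e / g) = e := Nat.mul_div_cancel' (Nat.gcd_dvd_right w e)
  have hge : g ≤ e := Nat.le_of_dvd (by omega) (Nat.gcd_dvd_right w e)
  have hdvd2 : (w / g) ∣ d := by
    have h1 : g * (w / g) ∣ g * ((e / g) * d) := by
      rw [hwg, ← mul_assoc, heg]; exact hdvd
    have h2 : (w / g) ∣ (e / g) * d :=
      (mul_dvd_mul_iff_left (by omega : g ≠ 0)).mp h1
    exact hcop.dvd_of_dvd_mul_left h2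
  have htd : w / g ≤ d := Nat.le_of_dvd (by omega) hdvd2
  refine ⟨g, w / g, hwg.symm, ?_, by omega, ?_, by omega⟩
  · by_contra h
    have hg1 : g = 1 := by omega
    have : w ∣ d := by rw [hg1, Nat.div_one] at hdvd2; exact hdvd2
    have := Nat.le_of_dvd (by omega) this
    omega
  · by_contra h
    have ht1 : w / g = 1 := by
      have : 0 < w / g := by
        rcases Nat.eq_zero_or_pos (w / g) with h0 | h0
        · rw [h0, mul_zero] at hwg; omega
        · exact h0
      omega
    rw [ht1, mul_one] at hwg
    omega
end

section
/- Let w ≥ k ≥ 3 and suppose that w is prime or w > (k−1)². Then there exists a PDP(k, kw). -/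
/-- Transport a PDP along an equivalence of point sets. -/
theorem isPDP_transport {α β : Type} [DecidableEq α] [DecidableEq β] (e : α ≃ β) {k : ℕ}
    {P : Fin k → Finset (Finset α)} (hP : IsPDP k P) :
    IsPDP k (fun i => (P i).image (Finset.map e.toEmbedding)) := by
  obtain ⟨hpar, hpair, hsdr⟩ := hP
  have roundtrip : ∀ B : Finset α, (B.map e.toEmbedding).map e.symm.toEmbedding = B := by
    intro B; ext a; simp [Finset.mem_map_equiv]
  refine ⟨?_, ?_, ?_⟩
  · intro i
    obtain ⟨hcard, huniq⟩ := hpar i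
    constructor
    · intro B hB
      simp only [Finset.mem_image] at hB
      obtain ⟨B0, hB0, rfl⟩ := hB
      rw [Finset.card_map]; exact hcard B0 hB0
    · intro x
      obtain ⟨B, ⟨hB1, hB2⟩, hu⟩ := huniq (e.symm x)
      refine ⟨B.map e.toEmbedding, ⟨Finset.mem_image_of_mem _ hB1, ?_⟩, ?_⟩
      · rw [Finset.mem_map_equiv]; exact hB2
      · rintro C ⟨hC1, hC2⟩
        simp only [Finset.mem_image] at hC1
        obtain ⟨B0, hB0, rfl⟩ := hC1
        rw [Finset.mem_map_equiv] at hC2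
        rw [hu B0 ⟨hB0, hC2⟩]
  · intro x y hxy i j B hB B' hB' hxB hyB hxB' hyB'
    simp only [Finset.mem_image] at hB hB'
    obtain ⟨B0, hB0, rfl⟩ := hB
    obtain ⟨B0', hB0', rfl⟩ := hB'
    rw [Finset.mem_map_equiv] at hxB hyB hxB' hyB'
    have hxy' : e.symm x ≠ e.symm y := fun hc => hxy (by simpa using congrArg e hc)
    obtain ⟨hij, hBB⟩ := hpair (e.symm x) (e.symm y) hxy' i j B0 hB0 B0' hB0' hxB hyB hxB' hyB'
    exact ⟨hij, by rw [hBB]⟩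
  · obtain ⟨h, h1, h2⟩ := hsdr
    refine ⟨fun p => e (h (p.1, p.2.map e.symm.toEmbedding)), ?_, ?_⟩
    · intro i B hB
      simp only [Finset.mem_image] at hB
      obtain ⟨B0, hB0, rfl⟩ := hB
      simp only [roundtrip]
      exact Finset.mem_map_of_mem _ (h1 i B0 hB0)
    · intro x
      obtain ⟨⟨i, B⟩, ⟨hB1, hB2⟩, hu⟩ := h2 (e.symm x)
      refine ⟨(i, B.map e.toEmbedding), ⟨Finset.mem_image_of_mem _ hB1, ?_⟩, ?_⟩
      · simp only [roundtrip, hB2, Equiv.apply_symm_apply]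
      · rintro ⟨j, C⟩ ⟨hC1, hC2⟩
        simp only [Finset.mem_image] at hC1
        obtain ⟨B0, hB0, rfl⟩ := hC1
        simp only [roundtrip] at hC2
        have hkey : ((j, B0) : Fin k × Finset α) = (i, B) :=
          hu (j, B0) ⟨hB0, by rw [← hC2, Equiv.symm_apply_apply]⟩
        rw [Prod.ext_iff] at hkey ⊢
        exact ⟨hkey.1, by rw [show B0 = B from hkey.2]⟩

/-- The key cancellation lemma. -/
theorem pdp_key_cancel (k w : ℕ) (hw : k ≤ w)
    (h : Nat.Prime w ∨ (k - 1) ^ 2 < w)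
    (i j a b : Fin k) (hab : a ≠ b)
    (heq : (((i : ℕ) : ZMod w) - ((j : ℕ) : ZMod w)) *
      (((a : ℕ) : ZMod w) - ((b : ℕ) : ZMod w)) = 0) : i = j := by
  set d1 : ℤ := (i : ℕ) - (j : ℕ) with hd1
  set d2 : ℤ := (a : ℕ) - (b : ℕ) with hd2
  have hcast : ((d1 * d2 : ℤ) : ZMod w) = 0 := by
    rw [hd1, hd2]
    push_cast
    exact heq
  have hdvd : (w : ℤ) ∣ d1 * d2 := (ZMod.intCast_zmod_eq_zero_iff_dvd _ _).mp hcast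
  have hi : (i : ℕ) < k := i.isLt
  have hj : (j : ℕ) < k := j.isLt
  have ha : (a : ℕ) < k := a.isLt
  have hb : (b : ℕ) < k := b.isLt
  have hd2ne : d2 ≠ 0 := by
    intro hc
    apply hab
    apply Fin.ext
    omega
  have hgoal : d1 = 0 := by
    by_contra hd1ne
    rcases h with hp | hlarge
    · rcases (Nat.prime_iff_prime_int.mp hp).dvd_mul.mp hdvd with hdd | hdd
      · have := Int.le_of_dvd (abs_pos.mpr hd1ne) ((dvd_abs _ _).mpr hdd)
        have h1 : |d1| < w := by rw [abs_lt]; omega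
        omega
      · have := Int.le_of_dvd (abs_pos.mpr hd2ne) ((dvd_abs _ _).mpr hdd)
        have h2 : |d2| < w := by rw [abs_lt]; omega
        omega
    · have hne : d1 * d2 ≠ 0 := mul_ne_zero hd1ne hd2ne
      have hle := Int.le_of_dvd (abs_pos.mpr hne) ((dvd_abs _ _).mpr hdvd)
      rw [abs_mul] at hle
      have h1 : |d1| ≤ (k : ℤ) - 1 := by rw [abs_le]; omega
      have h2 : |d2| ≤ (k : ℤ) - 1 := by rw [abs_le]; omega
      have hbig : |d1| * |d2| ≤ ((k : ℤ) - 1) * ((k : ℤ) - 1) :=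
        mul_le_mul h1 h2 (abs_nonneg _) (by omega)
      have hk2 : ((k - 1) ^ 2 : ℕ) < w := hlarge
      have : (((k - 1) ^ 2 : ℕ) : ℤ) < w := by exact_mod_cast hk2
      have hcastk : (((k - 1) : ℕ) : ℤ) = (k : ℤ) - 1 := by
        have : 1 ≤ k := by omega
        push_cast [this]
        ring
      nlinarith [sq_nonneg ((k:ℤ) - 1)]
  apply Fin.ext
  omega

/-- Let `w ≥ k ≥ 3` and suppose that `w` is prime or `w > (k - 1)²`. Then there is a
PDP(k, kw). -/
theorem pdp_of_prime_or_large (k w : ℕ) (hk : 3 ≤ k) (hw : k ≤ w)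
    (h : Nat.Prime w ∨ (k - 1) ^ 2 < w) :
    PDPExists k (k * w) := by
  haveI : NeZero w := ⟨by omega⟩
  haveI : NeZero k := ⟨by omega⟩
  -- the point set
  set α := Fin k × ZMod w with hα
  -- the blocks
  set blk : Fin k → ZMod w → Finset α := fun i c =>
    Finset.univ.image (fun x : Fin k => (x, ((i : ℕ) : ZMod w) * ((x : ℕ) : ZMod w) + c))
    with hblk
  set P : Fin k → Finset (Finset α) := fun i => Finset.univ.image (blk i) with hP
  have mem_blk : ∀ (i : Fin k) (c : ZMod w) (p : α),
      p ∈ blk i c ↔ p.2 = ((i : ℕ) : ZMod w) * ((p.1 : ℕ) : ZMod w) + c := by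
    intro i c p
    simp only [hblk, Finset.mem_image, Finset.mem_univ, true_and]
    constructor
    · rintro ⟨x, rfl⟩; rfl
    · intro hp
      exact ⟨p.1, by rw [← hp]⟩
  have mem_P : ∀ (i : Fin k) (B : Finset α), B ∈ P i ↔ ∃ c, blk i c = B := by
    intro i B
    simp [hP, Finset.mem_image]
  have hPDP : IsPDP k P := by
    refine ⟨?_, ?_, ?_⟩
    · -- parallel classes
      intro i
      constructor
      · intro B hB
        rw [mem_P] at hB
        obtain ⟨c, rfl⟩ := hB
        rw [hblk]
        rw [Finset.card_image_of_injective _ (fun x y hxy => (Prod.mk.injEq _ _ _ _ ▸ hxy).1)]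
        simp
      · intro p
        refine ⟨blk i (p.2 - ((i : ℕ) : ZMod w) * ((p.1 : ℕ) : ZMod w)),
          ⟨(mem_P _ _).mpr ⟨_, rfl⟩, (mem_blk _ _ _).mpr (by ring)⟩, ?_⟩
        rintro B ⟨hB, hpB⟩
        rw [mem_P] at hB
        obtain ⟨c, rfl⟩ := hB
        rw [mem_blk] at hpB
        congr 1
        rw [hpB]; ring
    · -- pair condition
      intro x y hxy i j B hB B' hB' hxB hyB hxB' hyB'
      rw [mem_P] at hB hB'
      obtain ⟨c, rfl⟩ := hB
      obtain ⟨c', rfl⟩ := hB'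
      rw [mem_blk] at hxB hyB hxB' hyB'
      have hx1 : x.1 ≠ y.1 := by
        intro hc
        apply hxy
        apply Prod.ext hc
        rw [hxB, hyB, hc]
      have heq : (((i : ℕ) : ZMod w) - ((j : ℕ) : ZMod w)) *
          (((x.1 : ℕ) : ZMod w) - ((y.1 : ℕ) : ZMod w)) = 0 := by
        linear_combination hxB' - hxB + hyB - hyB'
      have hij : i = j := pdp_key_cancel k w hw h i j x.1 y.1 hx1 heq
      subst hij
      refine ⟨rfl, ?_⟩
      congr 1
      have : ((i : ℕ) : ZMod w) * ((x.1 : ℕ) : ZMod w) + c =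
          ((i : ℕ) : ZMod w) * ((x.1 : ℕ) : ZMod w) + c' := by
        rw [← hxB, ← hxB']
      exact (add_left_cancel this)
    · -- SDR
      set σ : Finset α → ZMod w := fun B => ∑ p ∈ B, if p.1 = 0 then p.2 else 0 with hσ
      have hσblk : ∀ (i : Fin k) (c : ZMod w), σ (blk i c) = c := by
        intro i c
        simp only [hσ, hblk]
        rw [Finset.sum_image (by intro x _ y _ hxy; exact (Prod.mk.injEq _ _ _ _ ▸ hxy).1)]
        simp only
        rw [Finset.sum_ite_eq' Finset.univ (0 : Fin k)
          (fun x => ((i : ℕ) : ZMod w) * ((x : ℕ) : ZMod w) + c)]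
        simp
      set hrep : Fin k × Finset α → α :=
        fun q => (q.1, ((q.1 : ℕ) : ZMod w) * ((q.1 : ℕ) : ZMod w) + σ q.2) with hhrep
      have hrep_blk : ∀ (i : Fin k) (c : ZMod w),
          hrep (i, blk i c) = (i, ((i : ℕ) : ZMod w) * ((i : ℕ) : ZMod w) + c) := by
        intro i c
        simp only [hhrep, hσblk]
      refine ⟨hrep, ?_, ?_⟩
      · intro i B hB
        rw [mem_P] at hB
        obtain ⟨c, rfl⟩ := hB
        rw [hrep_blk, mem_blk]
      · rintro ⟨a, b⟩
        refine ⟨(a, blk a (b - ((a : ℕ) : ZMod w) * ((a : ℕ) : ZMod w))),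
          ⟨(mem_P _ _).mpr ⟨_, rfl⟩, ?_⟩, ?_⟩
        · rw [hrep_blk]
          exact Prod.ext rfl (by ring)
        · rintro ⟨j, C⟩ ⟨hC, hval⟩
          simp only at hC
          rw [mem_P] at hC
          obtain ⟨c, rfl⟩ := hC
          rw [hrep_blk, Prod.mk.injEq] at hval
          obtain ⟨hj, hc⟩ := hval
          subst hj
          have hc' : c = b - ((j : ℕ) : ZMod w) * ((j : ℕ) : ZMod w) := by
            rw [← hc]; ring
          rw [hc']
  -- transport to Fin (k * w)
  have e : α ≃ Fin (k * w) :=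
    (Equiv.prodCongrRight fun _ => (Fintype.equivFinOfCardEq (ZMod.card w))).trans
      finProdFinEquiv
  exact ⟨_, isPDP_transport e hPDP⟩
end

section
/- For every positive integer w, a PDP(4, 4w) exists if and only if w ≥ 4. -/
section Construction

variable {G : Type} [AddCommGroup G] [Fintype G] [DecidableEq G]

/-- The key property of a base matrix: for distinct columns `r ≠ r'`, the map
`i ↦ b i r' - b i r` is injective. -/
def GoodMat (b : Fin 4 → Fin 4 → G) : Prop :=
  ∀ i i' r r' : Fin 4, r ≠ r' → b i r' - b i r = b i' r' - b i' r → i = i'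

instance (b : Fin 4 → Fin 4 → G) : Decidable (GoodMat b) := by
  unfold GoodMat; infer_instance

/-- Encoding of `Fin 4 × G` into `Fin (4*w)`. -/
def enc {w : ℕ} (e : G ≃ Fin w) (r : Fin 4) (m : G) : Fin (4 * w) :=
  ⟨4 * (e m : ℕ) + (r : ℕ), by have h1 := (e m).isLt; have h2 := r.isLt; omega⟩

lemma enc_inj {w : ℕ} (e : G ≃ Fin w) {r r' : Fin 4} {m m' : G}
    (h : enc e r m = enc e r' m') : r = r' ∧ m = m' := by
  have hv : 4 * (e m : ℕ) + (r : ℕ) = 4 * (e m' : ℕ) + (r' : ℕ) := congrArg Fin.val h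
  have h1 := r.isLt; have h2 := r'.isLt
  have hr : (r : ℕ) = (r' : ℕ) ∧ (e m : ℕ) = (e m' : ℕ) := by omega
  refine ⟨Fin.ext hr.1, e.injective (Fin.ext hr.2)⟩

lemma enc_mod {w : ℕ} (e : G ≃ Fin w) (r : Fin 4) (m : G) :
    ((enc e r m : ℕ)) % 4 = (r : ℕ) := by
  have h2 := r.isLt
  show (4 * (e m : ℕ) + (r : ℕ)) % 4 = (r : ℕ)
  omega

lemma enc_surj {w : ℕ} (e : G ≃ Fin w) (x : Fin (4 * w)) :
    ∃ (r : Fin 4) (m : G), x = enc e r m := by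
  have hx := x.isLt
  refine ⟨⟨(x : ℕ) % 4, by omega⟩, e.symm ⟨(x : ℕ) / 4, by omega⟩, ?_⟩
  apply Fin.ext
  show (x : ℕ) = 4 * ((e (e.symm ⟨(x : ℕ) / 4, by omega⟩)) : ℕ) + (x : ℕ) % 4
  rw [Equiv.apply_symm_apply]
  show (x : ℕ) = 4 * ((x : ℕ) / 4) + (x : ℕ) % 4
  omega

/-- The block of course `i` with index `j`. -/
def blk {w : ℕ} (e : G ≃ Fin w) (b : Fin 4 → Fin 4 → G) (i : Fin 4) (j : G) :
    Finset (Fin (4 * w)) :=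
  Finset.image (fun r : Fin 4 => enc e r (b i r + j)) Finset.univ

/-- The parallel class of course `i`. -/
def cls {w : ℕ} (e : G ≃ Fin w) (b : Fin 4 → Fin 4 → G) (i : Fin 4) :
    Finset (Finset (Fin (4 * w))) :=
  Finset.image (fun j : G => blk e b i j) Finset.univ

lemma mem_blk {w : ℕ} (e : G ≃ Fin w) (b : Fin 4 → Fin 4 → G) {i : Fin 4} {j : G}
    {x : Fin (4 * w)} : x ∈ blk e b i j ↔ ∃ r : Fin 4, x = enc e r (b i r + j) := by
  simp [blk, eq_comm]

lemma mem_cls {w : ℕ} (e : G ≃ Fin w) (b : Fin 4 → Fin 4 → G) {i : Fin 4}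
    {B : Finset (Fin (4 * w))} : B ∈ cls e b i ↔ ∃ j : G, B = blk e b i j := by
  simp [cls, eq_comm]

lemma filter_blk {w : ℕ} (e : G ≃ Fin w) (b : Fin 4 → Fin 4 → G) (i : Fin 4) (j : G) :
    (blk e b i j).filter (fun x : Fin (4 * w) => (x : ℕ) % 4 = (i : ℕ)) = {enc e i (b i i + j)} := by
  ext x
  simp only [Finset.mem_filter, Finset.mem_singleton, mem_blk]
  constructor
  · rintro ⟨⟨r, rfl⟩, hmod⟩
    rw [enc_mod] at hmod
    rw [Fin.ext hmod]
  · rintro rfl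
    exact ⟨⟨i, rfl⟩, enc_mod e i _⟩

/-- The SDR function. -/
noncomputable def sdrFun {w : ℕ} (e : G ≃ Fin w) (p : Fin 4 × Finset (Fin (4 * w))) :
    Fin (4 * w) :=
  if hn : (p.2.filter (fun x : Fin (4 * w) => (x : ℕ) % 4 = (p.1 : ℕ))).Nonempty then
    (p.2.filter (fun x : Fin (4 * w) => (x : ℕ) % 4 = (p.1 : ℕ))).min' hn
  else enc e p.1 0

lemma sdrFun_blk {w : ℕ} (e : G ≃ Fin w) (b : Fin 4 → Fin 4 → G) (i : Fin 4) (j : G) :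
    sdrFun e (i, blk e b i j) = enc e i (b i i + j) := by
  unfold sdrFun
  simp only [filter_blk]
  rw [dif_pos (Finset.singleton_nonempty _)]
  exact Finset.min'_singleton _

theorem pdp_of_goodMat {w : ℕ} (hcard : Fintype.card G = w)
    (b : Fin 4 → Fin 4 → G) (hb : GoodMat b) : PDPExists 4 (4 * w) := by
  have e : G ≃ Fin w := Fintype.equivFinOfCardEq hcard
  refine ⟨cls e b, ?_, ?_, ?_⟩
  · -- parallel classes
    intro i
    constructor
    · intro B hB
      rw [mem_cls] at hB
      obtain ⟨j, rfl⟩ := hB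
      rw [blk, Finset.card_image_of_injective _ (fun r r' h => (enc_inj e h).1)]
      simp
    · intro x
      obtain ⟨r, m, rfl⟩ := enc_surj e x
      refine ⟨blk e b i (m - b i r), ⟨(mem_cls e b).2 ⟨_, rfl⟩, (mem_blk e b).2 ⟨r, by
        rw [add_sub_cancel]⟩⟩, ?_⟩
      rintro B ⟨hB, hxB⟩
      obtain ⟨j, rfl⟩ := (mem_cls e b).1 hB
      obtain ⟨r', hr'⟩ := (mem_blk e b).1 hxB
      obtain ⟨hr, hm⟩ := enc_inj e hr'
      subst hr
      have : j = m - b i r := by rw [hm, add_sub_cancel_left]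
      rw [this]
  · -- pair condition
    intro x y hxy i i' B hB B' hB' hxB hyB hxB' hyB'
    obtain ⟨j, rfl⟩ := (mem_cls e b).1 hB
    obtain ⟨j', rfl⟩ := (mem_cls e b).1 hB'
    obtain ⟨rx, hrx⟩ := (mem_blk e b).1 hxB
    obtain ⟨ry, hry⟩ := (mem_blk e b).1 hyB
    obtain ⟨rx', hrx'⟩ := (mem_blk e b).1 hxB'
    obtain ⟨ry', hry'⟩ := (mem_blk e b).1 hyB'
    obtain ⟨hr1, hm1⟩ := enc_inj e (hrx ▸ hrx')
    obtain ⟨hr2, hm2⟩ := enc_inj e (hry ▸ hry')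
    subst hr1; subst hr2
    have hrneq : rx ≠ ry := by
      rintro rfl
      exact hxy (hrx.trans hry.symm)
    have key : b i ry - b i rx = b i' ry - b i' rx := by
      have h1 : b i rx + j = b i' rx + j' := hm1
      have h2 : b i ry + j = b i' ry + j' := hm2
      have := congrArg₂ (· - ·) h2 h1
      simpa [add_sub_add_comm] using this
    have hii : i = i' := hb i i' rx ry hrneq key
    subst hii
    have hjj : j = j' := by
      have h1 : b i rx + j = b i rx + j' := hm1
      exact add_left_cancel h1
    exact ⟨rfl, by rw [hjj]⟩
  · -- SDR
    refine ⟨sdrFun e, ?_, ?_⟩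
    · intro i B hB
      obtain ⟨j, rfl⟩ := (mem_cls e b).1 hB
      rw [sdrFun_blk]
      exact (mem_blk e b).2 ⟨i, rfl⟩
    · intro x
      obtain ⟨r, m, rfl⟩ := enc_surj e x
      refine ⟨(r, blk e b r (m - b r r)), ⟨(mem_cls e b).2 ⟨_, rfl⟩, by
        rw [sdrFun_blk, add_sub_cancel]⟩, ?_⟩
      rintro ⟨i, B⟩ ⟨hB, hx⟩
      dsimp only at hB hx
      obtain ⟨j, rfl⟩ := (mem_cls e b).1 hB
      rw [sdrFun_blk] at hx
      obtain ⟨hri, hmj⟩ := enc_inj e hx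
      subst hri
      have : j = m - b i i := by rw [← hmj, add_sub_cancel_left]
      subst this
      rfl

end Construction

/-- The base matrix for `w = 4`, over the Klein four-group: multiplication in `GF(4)`. -/
def bMat4 : Fin 4 → Fin 4 → ZMod 2 × ZMod 2 :=
  ![![(0,0), (0,0), (0,0), (0,0)],
    ![(0,0), (1,0), (0,1), (1,1)],
    ![(0,0), (0,1), (1,1), (1,0)],
    ![(0,0), (1,1), (1,0), (0,1)]]

/-- The base matrix for `w = 6` and `w = 9`. -/
def bMat69 : Fin 4 → Fin 4 → ℕ :=
  ![![0,0,0,0], ![0,1,2,3], ![0,2,1,5], ![0,3,5,1]]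

lemma goodMat_generic (w : ℕ) (hw : 10 ≤ w) [NeZero w] :
    GoodMat (fun i r : Fin 4 => (((i : ℕ) * (r : ℕ) : ℕ) : ZMod w)) := by
  intro i i' r r' hrr h
  by_contra hii
  rw [sub_eq_sub_iff_add_eq_add] at h
  have h2 : ((((i : ℕ) * (r' : ℕ) + (i' : ℕ) * (r : ℕ) : ℕ)) : ZMod w)
      = (((i' : ℕ) * (r' : ℕ) + (i : ℕ) * (r : ℕ) : ℕ) : ZMod w) := by push_cast; push_cast at h; linear_combination h
  rw [ZMod.natCast_eq_natCast_iff] at h2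
  have hdvd : (w : ℤ) ∣ ((i' : ℕ) * (r' : ℕ) + (i : ℕ) * (r : ℕ) : ℤ)
      - ((i : ℕ) * (r' : ℕ) + (i' : ℕ) * (r : ℕ) : ℤ) := h2.dvd
  set d : ℤ := ((i' : ℤ) - (i : ℤ)) * ((r' : ℤ) - (r : ℤ)) with hd
  have hdeq : ((i' : ℕ) * (r' : ℕ) + (i : ℕ) * (r : ℕ) : ℤ)
      - ((i : ℕ) * (r' : ℕ) + (i' : ℕ) * (r : ℕ) : ℤ) = d := by
    push_cast; ring
  rw [hdeq] at hdvd
  have hi : (i : ℕ) < 4 := i.isLt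
  have hi' : (i' : ℕ) < 4 := i'.isLt
  have hr : (r : ℕ) < 4 := r.isLt
  have hr' : (r' : ℕ) < 4 := r'.isLt
  have hine : (i : ℤ) ≠ (i' : ℤ) := by
    intro hc
    exact hii (Fin.ext (by exact_mod_cast hc))
  have hrne : (r : ℤ) ≠ (r' : ℤ) := by
    intro hc
    exact hrr (Fin.ext (by exact_mod_cast hc))
  have hdne : d ≠ 0 := mul_ne_zero (sub_ne_zero.2 (Ne.symm hine)) (sub_ne_zero.2 (Ne.symm hrne))
  have hle : (w : ℤ) ≤ |d| := Int.le_of_dvd (abs_pos.2 hdne) ((dvd_abs _ _).2 hdvd)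
  have hb1 : |((i' : ℤ) - (i : ℤ))| ≤ 3 := by
    rw [abs_le]
    constructor <;> [skip; skip] <;>
    · have h1 : ((i : ℕ) : ℤ) < 4 := by exact_mod_cast hi
      have h2 : ((i' : ℕ) : ℤ) < 4 := by exact_mod_cast hi'
      have h3 : (0 : ℤ) ≤ ((i : ℕ) : ℤ) := Int.natCast_nonneg _
      have h4 : (0 : ℤ) ≤ ((i' : ℕ) : ℤ) := Int.natCast_nonneg _
      omega
  have hb2 : |((r' : ℤ) - (r : ℤ))| ≤ 3 := by
    rw [abs_le]
    constructor <;> [skip; skip] <;>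
    · have h1 : ((r : ℕ) : ℤ) < 4 := by exact_mod_cast hr
      have h2 : ((r' : ℕ) : ℤ) < 4 := by exact_mod_cast hr'
      have h3 : (0 : ℤ) ≤ ((r : ℕ) : ℤ) := Int.natCast_nonneg _
      have h4 : (0 : ℤ) ≤ ((r' : ℕ) : ℤ) := Int.natCast_nonneg _
      omega
  have : |d| ≤ 9 := by
    rw [hd, abs_mul]
    calc |((i' : ℤ) - (i : ℤ))| * |((r' : ℤ) - (r : ℤ))| ≤ 3 * 3 :=
      mul_le_mul hb1 hb2 (abs_nonneg _) (by norm_num)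
    _ = 9 := by norm_num
  omega

/-- Existence direction. -/
lemma pdp_exists_of_four_le (w : ℕ) (hw4 : 4 ≤ w) : PDPExists 4 (4 * w) := by
  haveI : NeZero w := ⟨by omega⟩
  by_cases h10 : 10 ≤ w
  · exact pdp_of_goodMat (ZMod.card w) _ (goodMat_generic w h10)
  · interval_cases w
    · exact pdp_of_goodMat (by decide : Fintype.card (ZMod 2 × ZMod 2) = 4) bMat4 (by decide)
    · exact pdp_of_goodMat (ZMod.card 5) (fun i r : Fin 4 => (((i : ℕ) * (r : ℕ) : ℕ) : ZMod 5)) (by decide)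
    · exact pdp_of_goodMat (ZMod.card 6) (fun i r : Fin 4 => ((bMat69 i r : ℕ) : ZMod 6)) (by decide)
    · exact pdp_of_goodMat (ZMod.card 7) (fun i r : Fin 4 => (((i : ℕ) * (r : ℕ) : ℕ) : ZMod 7)) (by decide)
    · exact pdp_of_goodMat (ZMod.card 8) (fun i r : Fin 4 => (((i : ℕ) * (r : ℕ) : ℕ) : ZMod 8)) (by decide)
    · exact pdp_of_goodMat (ZMod.card 9) (fun i r : Fin 4 => ((bMat69 i r : ℕ) : ZMod 9)) (by decide)

/-- Nonexistence direction. -/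
lemma four_le_of_pdp_exists (w : ℕ) (hw : 0 < w) (h : PDPExists 4 (4 * w)) : 4 ≤ w := by
  obtain ⟨P, hpar, hpc, _⟩ := h
  set x : Fin (4 * w) := ⟨0, by omega⟩ with hxdef
  have hB : ∀ i : Fin 4, ∃ B, B ∈ P i ∧ x ∈ B := fun i => ((hpar i).2 x).exists
  choose B hBP hBx using hB
  set C : Fin 4 → Finset (Fin (4 * w)) := fun i => (B i).erase x with hC
  have hCcard : ∀ i, (C i).card = 3 := by
    intro i
    rw [hC]
    rw [Finset.card_erase_of_mem (hBx i), (hpar i).1 _ (hBP i)]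
  have hCdisj : ∀ i j : Fin 4, i ≠ j → Disjoint (C i) (C j) := by
    intro i j hij
    rw [Finset.disjoint_left]
    intro y hyi hyj
    have hyx : y ≠ x := Finset.ne_of_mem_erase hyi
    have := (hpc x y (Ne.symm hyx) i j (B i) (hBP i) (B j) (hBP j) (hBx i)
      (Finset.mem_of_mem_erase hyi) (hBx j) (Finset.mem_of_mem_erase hyj)).1
    exact hij this
  have hxC : ∀ i, x ∉ C i := fun i => Finset.notMem_erase x (B i)
  set U : Finset (Fin (4 * w)) := C 0 ∪ C 1 ∪ C 2 ∪ C 3 with hU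
  have hd01 : Disjoint (C 0) (C 1) := hCdisj 0 1 (by decide)
  have hd2 : Disjoint (C 0 ∪ C 1) (C 2) :=
    Finset.disjoint_union_left.2 ⟨hCdisj 0 2 (by decide), hCdisj 1 2 (by decide)⟩
  have hd3 : Disjoint (C 0 ∪ C 1 ∪ C 2) (C 3) :=
    Finset.disjoint_union_left.2 ⟨Finset.disjoint_union_left.2
      ⟨hCdisj 0 3 (by decide), hCdisj 1 3 (by decide)⟩, hCdisj 2 3 (by decide)⟩
  have hUcard : U.card = 12 := by
    rw [hU, Finset.card_union_of_disjoint hd3, Finset.card_union_of_disjoint hd2,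
      Finset.card_union_of_disjoint hd01, hCcard, hCcard, hCcard, hCcard]
  have hxU : x ∉ U := by
    rw [hU]
    simp only [Finset.mem_union, not_or]
    exact ⟨⟨⟨hxC 0, hxC 1⟩, hxC 2⟩, hxC 3⟩
  have h13 : (insert x U).card = 13 := by
    rw [Finset.card_insert_of_notMem hxU, hUcard]
  have hle : (insert x U).card ≤ 4 * w := by
    have := Finset.card_le_univ (insert x U)
    simpa using this
  omega

/-- For every positive integer `w`, a PDP(4, 4w) exists if and only if `w ≥ 4`. -/
theorem pdp_four_iff (w : ℕ) (hw : 0 < w) : PDPExists 4 (4 * w) ↔ 4 ≤ w :=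
  ⟨four_le_of_pdp_exists w hw, pdp_exists_of_four_le w⟩
end

section
/- Let X = Z_30 and B_0 = {0, 1, 8, 12, 14} ⊆ Z_30, and for i ∈ Z_30 let B_i = B_0 + i (the translate of B_0 by i). For 0 ≤ i ≤ 4 define P_i = { B_{i+5j} : j = 0, 1, …, 5 }, and define h(B_i) = i for 0 ≤ i ≤ 29. Then P_0, …, P_4 together with h form a PDP(5, 30): each P_i is a partition of Z_30 into six disjoint 5-element blocks, no pair of distinct elements of Z_30 occurs in more than one of the thirty blocks B_0, …, B_29, and h assigns to each block B_i one of its elements with every element of Z_30 assigned exactly once. -/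
private lemma buratti_diff :
    ∀ a ∈ ({0, 1, 8, 12, 14} : Finset (ZMod 30)), ∀ b ∈ ({0, 1, 8, 12, 14} : Finset (ZMod 30)),
    ∀ a' ∈ ({0, 1, 8, 12, 14} : Finset (ZMod 30)), ∀ b' ∈ ({0, 1, 8, 12, 14} : Finset (ZMod 30)),
    a ≠ b → a - b = a' - b' → a = a' := by decide

set_option maxHeartbeats 2000000 in
/-- Buratti's construction of a PDP(5, 30). Let `B i = {0,1,8,12,14} + i` in `ZMod 30`
for each `i : ZMod 30`, let `P i = { B (i + 5j) : j = 0, …, 5 }` for `0 ≤ i ≤ 4`, and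
let the host of the block `B i` be `i`. Then: every block `B i` has 5 elements; each
`P i` is a partition of `ZMod 30` into six disjoint blocks; no pair of distinct points
occurs in more than one of the thirty blocks `B 0, …, B 29`; and the host map assigns
to each block one of its elements with every element of `ZMod 30` assigned exactly
once. -/
theorem pdp_five_thirty_buratti
    (B : ZMod 30 → Finset (ZMod 30))
    (hB : ∀ i : ZMod 30, B i = ({0, 1, 8, 12, 14} : Finset (ZMod 30)).image (· + i))
    (h : ZMod 30 → ZMod 30) (hh : ∀ i : ZMod 30, h i = i) :
    (∀ i : ZMod 30, (B i).card = 5) ∧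
    (∀ i : Fin 5, ∀ x : ZMod 30,
        ∃! j : Fin 6, x ∈ B ((((i : ℕ) + 5 * (j : ℕ) : ℕ)) : ZMod 30)) ∧
    (∀ x y : ZMod 30, x ≠ y → ∀ i i' : ZMod 30,
        x ∈ B i → y ∈ B i → x ∈ B i' → y ∈ B i' → i = i') ∧
    (∀ i : ZMod 30, h i ∈ B i) ∧
    (∀ x : ZMod 30, ∃! i : ZMod 30, h i = x) := by
  refine ⟨?_, ?_, ?_, ?_, ?_⟩
  · simp only [hB]; decide
  · simp only [hB, ExistsUnique]; decide
  · intro x y hxy i i' hxi hyi hxi' hyi'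
    rw [hB i] at hxi hyi
    rw [hB i'] at hxi' hyi'
    simp only [Finset.mem_image] at hxi hyi hxi' hyi'
    obtain ⟨a, ha, rfl⟩ := hxi
    obtain ⟨b, hb, hybi⟩ := hyi
    obtain ⟨a', ha', hai'⟩ := hxi'
    obtain ⟨b', hb', hbi'⟩ := hyi'
    have hab : a ≠ b := by rintro rfl; exact hxy hybi
    have hd : a - b = a' - b' := by
      have h1 : a + i - (b + i) = a' + i' - (b' + i') := by rw [hybi, hai', hbi']
      simpa [add_sub_add_comm] using h1
    have haa : a = a' := buratti_diff a ha b hb a' ha' b' hb' hab hd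
    have h2 : a + i' = a + i := haa ▸ hai'
    exact (add_right_injective a h2).symm
  · simp only [hB, hh]; decide
  · simp only [hh]; exact fun x => ⟨x, rfl, fun y hy => hy⟩
end
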